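/- arXiv:2303.01643 — 8 statements merged into one kernel-verified Lean document; each statement's English description precedes it below -/
import Mathlib

section
/- Let a, z : ℕ → ℕ be non-decreasing sequences satisfying k·(a 1 + z 1) = a k + z k for all k ∈ ℕ. Define F(x, s, y) := (a s - a x) + (z s - z y) for x ≤ s and y ≤ s (subtraction in ℤ, or natural subtraction, which agrees by monotonicity). Then for all natural numbers x, y, s, s', z' with x ≤ s, y ≤ s, y ≤ s', z' ≤ s', one has F(x, s, y) + F(y, s', z') = F(x, s + s' - y, z'). -/
/-- For non-decreasing sequences `a z : ℕ → ℕ` with `k * (a 1 + z 1) = a k + z k`,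
the invariant `F (x, s, y) = (a s - a x) + (z s - z y)` is additive under
composition: `F (x, s, y) + F (y, s', z') = F (x, s + s' - y, z')`. -/
theorem stmt_2 (a z : ℕ → ℕ) (ha : Monotone a) (hz : Monotone z)
    (hcond : ∀ k : ℕ, k * (a 1 + z 1) = a k + z k)
    (x s y s' z' : ℕ) (hxs : x ≤ s) (hys : y ≤ s) (hys' : y ≤ s') (hz' : z' ≤ s') :
    ((a s - a x) + (z s - z y)) + ((a s' - a y) + (z s' - z z')) =
      (a (s + s' - y) - a x) + (z (s + s' - y) - z z') := by
  have ht : y + (s + s' - y) = s + s' := by omega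
  have key : a s + z s + (a s' + z s') =
      (a y + z y) + (a (s + s' - y) + z (s + s' - y)) := by
    rw [← hcond s, ← hcond s', ← hcond y, ← hcond (s + s' - y),
      ← add_mul, ← add_mul, ht]
  have h1 := ha hxs
  have h2 := hz hys
  have h3 := ha hys'
  have h4 := hz hz'
  have h5 := ha (show x ≤ s + s' - y by omega)
  have h6 := hz (show z' ≤ s + s' - y by omega)
  omega
end

section
/- Let M be a cancellative commutative monoid whose only invertible element is the identity, and let F be a monoidal functor from the category of cospans of finite sets (morphisms are isomorphism classes of cospans, composition by pushout, tensor by disjoint union) to BM. Then F(c) = 0 for every cospan c. -/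
/-!
A cospan `X → S ← Y` is the composite of `X → S ← S` and `S → S ← Y`, and each of these two
families of one-legged cospans turns `F` into a functor from finite sets to `M`. As `M` has no
nontrivial units, such a functor kills split monomorphisms and split epimorphisms, hence (by
image factorization) every map with nonempty domain, and it takes one common value on all maps
from an empty set to a nonempty one: `η` for the input legs, `ε` for the output legs.
The closed cospan on one point then has value `k = η + ε`, and so does the closed cospan on two
points; but the latter is also the composite of two copies of the former, so `k + k = k`.
Cancellation gives `k = 0`, hence `η = ε = 0`.
-/

/-- A cospan of finite sets `X → S ← Y` (the apex `S` is finite). -/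
structure Cospan (X Y : Type) where
  S : Type
  finS : Finite S
  i : X → S
  o : Y → S

namespace Cospan

/-- The identity cospan `S → S ← S`. -/
def idC (S : Type) (hS : Finite S) : Cospan S S := ⟨S, hS, id, id⟩

/-- The relation generating the pushout of `S ← Y → S'`. -/
def pushoutRel {Y S S' : Type} (o : Y → S) (i' : Y → S') :
    (S ⊕ S') → (S ⊕ S') → Prop :=
  fun a b => ∃ y, a = Sum.inl (o y) ∧ b = Sum.inr (i' y)

/-- Composition of cospans by pushout over the shared foot. -/
def comp {X Y Z : Type} (c : Cospan X Y) (d : Cospan Y Z) : Cospan X Z where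
  S := Quot (pushoutRel c.o d.i)
  finS := by have := c.finS; have := d.finS; exact Quot.finite _
  i := fun x => Quot.mk _ (Sum.inl (c.i x))
  o := fun z => Quot.mk _ (Sum.inr (d.o z))

/-- Tensor (disjoint union) of cospans. -/
def tensor {X Y X' Y' : Type} (c : Cospan X Y) (d : Cospan X' Y') :
    Cospan (X ⊕ X') (Y ⊕ Y') where
  S := c.S ⊕ d.S
  finS := by have := c.finS; have := d.finS; infer_instance
  i := Sum.map c.i d.i
  o := Sum.map c.o d.o

/-- Isomorphism of cospans with the same feet: a bijection of apexes
commuting with both legs. -/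
structure Iso {X Y : Type} (c d : Cospan X Y) where
  e : c.S ≃ d.S
  hi : ∀ x, e (c.i x) = d.i x
  ho : ∀ y, e (c.o y) = d.o y

/-- The generator `μ = (2 → 1 ← 1)`. -/
def muC : Cospan (Fin 2) (Fin 1) := ⟨Fin 1, inferInstance, fun _ => 0, id⟩

/-- The generator `δ = (1 → 1 ← 2)`. -/
def deltaC : Cospan (Fin 1) (Fin 2) := ⟨Fin 1, inferInstance, id, fun _ => 0⟩

/-- The boundary cospan `η_n = (0 → n ← n)`. -/
def etaC (n : ℕ) : Cospan PEmpty (Fin n) := ⟨Fin n, inferInstance, PEmpty.elim, id⟩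

/-- The boundary cospan `ε_n = (n → n ← 0)`. -/
def epsC (n : ℕ) : Cospan (Fin n) PEmpty := ⟨Fin n, inferInstance, id, PEmpty.elim⟩

end Cospan

open Cospan Function

namespace Cospan

def ofInLeg {X S : Type} [Finite S] (f : X → S) : Cospan X S := ⟨S, inferInstance, f, id⟩

def ofOutLeg {S Y : Type} [Finite S] (g : Y → S) : Cospan S Y := ⟨S, inferInstance, id, g⟩

def closed (S : Type) [Finite S] : Cospan PEmpty PEmpty :=
  ⟨S, inferInstance, PEmpty.elim, PEmpty.elim⟩

def ofInLegCompIso {X T Z : Type} [Finite T] (f : X → T) (d : Cospan T Z) :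
    Iso ((ofInLeg f).comp d) ⟨d.S, d.finS, d.i ∘ f, d.o⟩ where
  e :=
    { toFun := Quot.lift (Sum.elim d.i id) (by rintro _ _ ⟨t, rfl, rfl⟩; rfl)
      invFun := fun s => Quot.mk _ (Sum.inr s)
      left_inv := by
        refine Quot.ind ?_
        rintro (t | s)
        · exact (Quot.sound ⟨t, rfl, rfl⟩).symm
        · rfl
      right_inv := fun _ => rfl }
  hi := fun _ => rfl
  ho := fun _ => rfl

def compOfOutLegIso {X Y Z : Type} [Finite Y] (c : Cospan X Y) (g : Z → Y) :
    Iso (c.comp (ofOutLeg g)) ⟨c.S, c.finS, c.i, c.o ∘ g⟩ where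
  e :=
    { toFun := Quot.lift (Sum.elim id c.o) (by rintro _ _ ⟨y, rfl, rfl⟩; rfl)
      invFun := fun s => Quot.mk _ (Sum.inl s)
      left_inv := by
        refine Quot.ind ?_
        rintro (s | y)
        · rfl
        · exact Quot.sound ⟨y, rfl, rfl⟩
      right_inv := fun _ => rfl }
  hi := fun _ => rfl
  ho := fun _ => rfl

def closedCompIso (A B : Type) [Finite A] [Finite B] :
    Iso ((closed A).comp (closed B)) (closed (A ⊕ B)) where
  e :=
    { toFun := Quot.lift id (by rintro _ _ ⟨⟨⟩, -⟩)
      invFun := Quot.mk _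
      left_inv := Quot.ind fun _ => rfl
      right_inv := fun _ => rfl }
  hi := fun x => x.elim
  ho := fun y => y.elim

end Cospan

structure IsFinSetFunctor {M : Type*} [AddCommMonoid M]
    (G : ∀ {X S : Type} [Finite X] [Finite S], (X → S) → M) : Prop where
  map_id : ∀ (S : Type) [Finite S], G (id : S → S) = 0
  map_comp : ∀ {X Y Z : Type} [Finite X] [Finite Y] [Finite Z] (f : X → Y) (g : Y → Z),
    G (g ∘ f) = G f + G g

namespace IsFinSetFunctor

variable {M : Type*} [AddCommMonoid M] {G : ∀ {X S : Type} [Finite X] [Finite S], (X → S) → M}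

theorem map_eq_zero_of_leftInverse (hG : IsFinSetFunctor G)
    (hM : ∀ x : M, (∃ y : M, x + y = 0) → x = 0) {X S : Type} [Finite X] [Finite S]
    {g : S → X} {f : X → S} (h : LeftInverse g f) : G f = 0 ∧ G g = 0 := by
  have hsum : G f + G g = 0 := by rw [← hG.map_comp, h.comp_eq_id, hG.map_id]
  exact ⟨hM _ ⟨_, hsum⟩, hM _ ⟨_, by rw [add_comm, hsum]⟩⟩

theorem map_eq_zero_of_nonempty (hG : IsFinSetFunctor G)
    (hM : ∀ x : M, (∃ y : M, x + y = 0) → x = 0) {X S : Type} [Finite X] [Finite S] [Nonempty X]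
    (f : X → S) : G f = 0 := by
  have hsurj : Surjective (Set.rangeFactorization f) := Set.rangeFactorization_surjective
  have hfac : G f = G (Set.rangeFactorization f) + G (Subtype.val : Set.range f → S) :=
    hG.map_comp (Set.rangeFactorization f) Subtype.val
  rw [hfac, (hG.map_eq_zero_of_leftInverse hM (rightInverse_surjInv hsurj)).2,
    (hG.map_eq_zero_of_leftInverse hM (leftInverse_invFun Subtype.val_injective)).1, add_zero]

theorem map_eq_zero_of_isEmpty (hG : IsFinSetFunctor G)
    (hM : ∀ x : M, (∃ y : M, x + y = 0) → x = 0) {X S : Type} [Finite X] [Finite S] [IsEmpty S]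
    (f : X → S) : G f = 0 :=
  have : IsEmpty X := f.isEmpty
  (hG.map_eq_zero_of_leftInverse hM (g := isEmptyElim) isEmptyElim).1

theorem map_eq_of_isEmpty (hG : IsFinSetFunctor G)
    (hM : ∀ x : M, (∃ y : M, x + y = 0) → x = 0) {X S X' S' : Type}
    [Finite X] [Finite S] [Finite X'] [Finite S'] [IsEmpty X] [IsEmpty X'] [Nonempty S]
    [Nonempty S'] (f : X → S) (f' : X' → S') : G f = G f' := by
  let u : S → S' := fun _ => Classical.arbitrary S'
  let e : X ≃ X' := Equiv.equivOfIsEmpty X X'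
  have hcomm : u ∘ f = f' ∘ e := funext isEmptyElim
  calc G f = G (u ∘ f) := by rw [hG.map_comp, hG.map_eq_zero_of_nonempty hM u, add_zero]
    _ = G (f' ∘ e) := by rw [hcomm]
    _ = G f' := by
      rw [hG.map_comp, (hG.map_eq_zero_of_leftInverse hM e.leftInverse_symm).1, zero_add]

theorem map_eq_zero (hG : IsFinSetFunctor G) (hM : ∀ x : M, (∃ y : M, x + y = 0) → x = 0)
    (h0 : G (PEmpty.elim : PEmpty → PUnit) = 0) {X S : Type} [Finite X] [Finite S]
    (f : X → S) : G f = 0 := by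
  rcases isEmpty_or_nonempty X with hX | hX
  · rcases isEmpty_or_nonempty S with hS | hS
    · exact hG.map_eq_zero_of_isEmpty hM f
    · rw [hG.map_eq_of_isEmpty hM f (PEmpty.elim : PEmpty → PUnit), h0]
  · exact hG.map_eq_zero_of_nonempty hM f

end IsFinSetFunctor

structure IsCospanFunctor {M : Type*} [AddCommMonoid M]
    (F : ∀ {X Y : Type} [Finite X] [Finite Y], Cospan X Y → M) : Prop where
  map_id : ∀ (S : Type) (hS : Finite S), F (idC S hS) = 0
  map_comp : ∀ {X Y Z : Type} [Finite X] [Finite Y] [Finite Z]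
    (c : Cospan X Y) (d : Cospan Y Z), F (c.comp d) = F c + F d
  map_iso : ∀ {X Y : Type} [Finite X] [Finite Y] (c d : Cospan X Y),
    Nonempty (Iso c d) → F c = F d

namespace IsCospanFunctor

variable {M : Type*} [AddCommMonoid M] {F : ∀ {X Y : Type} [Finite X] [Finite Y], Cospan X Y → M}

theorem isFinSetFunctor_ofInLeg (hF : IsCospanFunctor F) :
    IsFinSetFunctor (fun f => F (ofInLeg f)) where
  map_id S _ := hF.map_id S _
  map_comp f g := by
    rw [← hF.map_comp]
    exact (hF.map_iso _ _ ⟨ofInLegCompIso f (ofInLeg g)⟩).symm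

theorem isFinSetFunctor_ofOutLeg (hF : IsCospanFunctor F) :
    IsFinSetFunctor (fun g => F (ofOutLeg g)) where
  map_id S _ := hF.map_id S _
  map_comp f g := by
    rw [add_comm, ← hF.map_comp]
    exact (hF.map_iso _ _ ⟨compOfOutLegIso (ofOutLeg g) f⟩).symm

theorem map_mk (hF : IsCospanFunctor F) {X Y S : Type} [Finite X] [Finite Y] [Finite S]
    (i : X → S) (o : Y → S) :
    F (⟨S, inferInstance, i, o⟩ : Cospan X Y) = F (ofInLeg i) + F (ofOutLeg o) := by
  rw [← hF.map_comp]
  exact (hF.map_iso _ _ ⟨ofInLegCompIso i (ofOutLeg o)⟩).symm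

theorem map_closed_sum (hF : IsCospanFunctor F) (A B : Type) [Finite A] [Finite B] :
    F (closed (A ⊕ B)) = F (closed A) + F (closed B) := by
  rw [← hF.map_comp]
  exact (hF.map_iso _ _ ⟨closedCompIso A B⟩).symm

end IsCospanFunctor

theorem IsCospanFunctor.map_elim_eq_zero {M : Type*} [AddCancelCommMonoid M]
    {F : ∀ {X Y : Type} [Finite X] [Finite Y], Cospan X Y → M} (hF : IsCospanFunctor F)
    (hM : ∀ x : M, (∃ y : M, x + y = 0) → x = 0) :
    F (ofInLeg (PEmpty.elim : PEmpty → PUnit)) = 0 ∧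
      F (ofOutLeg (PEmpty.elim : PEmpty → PUnit)) = 0 := by
  set η := F (ofInLeg (PEmpty.elim : PEmpty → PUnit))
  set ε := F (ofOutLeg (PEmpty.elim : PEmpty → PUnit))
  have hk : F (closed PUnit) = η + ε := hF.map_mk _ _
  have hk2 : F (closed (PUnit ⊕ PUnit)) = η + ε := by
    rw [closed, hF.map_mk,
      hF.isFinSetFunctor_ofInLeg.map_eq_of_isEmpty hM _ (PEmpty.elim : PEmpty → PUnit),
      hF.isFinSetFunctor_ofOutLeg.map_eq_of_isEmpty hM _ (PEmpty.elim : PEmpty → PUnit)]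
  have hsum : η + ε = 0 := by
    rw [← hk, ← add_eq_left (a := F (closed PUnit)), ← hF.map_closed_sum, hk, hk2]
  exact ⟨hM _ ⟨_, hsum⟩, hM _ ⟨_, by rw [add_comm, hsum]⟩⟩

open Cospan in
theorem stmt_6_general (M : Type*) [AddCancelCommMonoid M]
    (hunits : ∀ x : M, (∃ y : M, x + y = 0) → x = 0)
    (F : ∀ {X Y : Type} [Finite X] [Finite Y], Cospan X Y → M)
    (hid : ∀ (S : Type) (hS : Finite S), F (idC S hS) = 0)
    (hcomp : ∀ {X Y Z : Type} [Finite X] [Finite Y] [Finite Z]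
      (c : Cospan X Y) (d : Cospan Y Z), F (c.comp d) = F c + F d)
    (hiso : ∀ {X Y : Type} [Finite X] [Finite Y] (c d : Cospan X Y),
      Nonempty (Iso c d) → F c = F d) :
    ∀ {X Y : Type} [Finite X] [Finite Y] (c : Cospan X Y), F c = 0 := by
  have hF : IsCospanFunctor F := ⟨hid, hcomp, hiso⟩
  obtain ⟨hη, hε⟩ := hF.map_elim_eq_zero hunits
  rintro X Y _ _ ⟨S, _, i, o⟩
  rw [hF.map_mk, hF.isFinSetFunctor_ofInLeg.map_eq_zero hunits hη i,
    hF.isFinSetFunctor_ofOutLeg.map_eq_zero hunits hε o, add_zero]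

open Cospan in
/-- If `M` is a cancellative commutative monoid whose only invertible element
is the identity, then every monoidal functor `F` from the category of cospans
of finite sets to `BM` (i.e. every assignment sending identities to `0` and
additive under composition and tensor, invariant under isomorphism of cospans)
vanishes on every cospan. -/
theorem stmt_6 (M : Type*) [AddCancelCommMonoid M]
    (hunits : ∀ x : M, (∃ y : M, x + y = 0) → x = 0)
    (F : ∀ {X Y : Type} [Finite X] [Finite Y], Cospan X Y → M)
    (hid : ∀ (S : Type) (hS : Finite S), F (idC S hS) = 0)
    (hcomp : ∀ {X Y Z : Type} [Finite X] [Finite Y] [Finite Z]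
      (c : Cospan X Y) (d : Cospan Y Z), F (c.comp d) = F c + F d)
    (htensor : ∀ {X Y X' Y' : Type} [Finite X] [Finite Y] [Finite X'] [Finite Y']
      (c : Cospan X Y) (d : Cospan X' Y'), F (c.tensor d) = F c + F d)
    (hiso : ∀ {X Y : Type} [Finite X] [Finite Y] (c d : Cospan X Y),
      Nonempty (Iso c d) → F c = F d) :
    ∀ {X Y : Type} [Finite X] [Finite Y] (c : Cospan X Y), F c = 0 :=
  stmt_6_general M hunits F hid hcomp hiso
end

section
/- Let (S, T, s, t) be a Petri net with T = {τ₁, ..., τ_N} nonempty, viewed as the open Petri net P = (S →^{id} S ←^{id} S, (S, T, s, t)). Then P equals the composite G₁ ∘ G₂ ∘ ... ∘ G_N, where G_i = (S →^{id} S ←^{id} S, (S, {τ_i}, s|_{{τ_i}}, t|_{{τ_i}})) is the open Petri net retaining only the i-th transition. Moreover this decomposition is invariant under permutation of the factors: composing the G_i in any order yields the same open Petri net. -/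
/-!
Since the pushout `S +_S S` of two identities is `S` again, composing two nets with identity
legs on `S` yields the net on `S` whose transitions are the disjoint union of theirs.
Composition respects isomorphism, so by induction on the number of factors
`G_{π 0} ∘ ⋯ ∘ G_{π (N-1)}` is the net on `S` with transitions `Fin N` and input/output maps
`s ∘ π`, `t ∘ π`; relabelling the transitions along `π` gives back `(S, Fin N, s, t)`.
-/

/-- An open Petri net: a cospan of finite sets `X → S ← Y` decorated by a
Petri net with (finite) species set `S` and (finite) transition set `T`;
`src τ` and `tgt τ` are the input and output multisets of the transition `τ`. -/
structure OpenPetri (X Y : Type) where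
  S : Type
  finS : Finite S
  i : X → S
  o : Y → S
  T : Type
  finT : Finite T
  src : T → S → ℕ
  tgt : T → S → ℕ

namespace OpenPetri

/-- The transitionless open Petri net on a cospan `X → S ← Y`. -/
def trNet {X Y : Type} (S : Type) (hS : Finite S) (i : X → S) (o : Y → S) :
    OpenPetri X Y :=
  ⟨S, hS, i, o, PEmpty, inferInstance, fun t => t.elim, fun t => t.elim⟩

/-- The identity open Petri net on a finite set `S`. -/
def idNet (S : Type) (hS : Finite S) : OpenPetri S S := trNet S hS id id

/-- The relation generating the pushout of `S ← Y → S'`. -/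
def pushoutRel {Y S S' : Type} (o : Y → S) (i' : Y → S') :
    (S ⊕ S') → (S ⊕ S') → Prop :=
  fun a b => ∃ y, a = Sum.inl (o y) ∧ b = Sum.inr (i' y)

/-- Composition of open Petri nets: pushout of the underlying cospans,
disjoint union of transitions, and source/target multisets pushed forward
along the pushout maps. -/
noncomputable def comp {X Y Z : Type} (P : OpenPetri X Y) (Q : OpenPetri Y Z) :
    OpenPetri X Z where
  S := Quot (pushoutRel P.o Q.i)
  finS := by have := P.finS; have := Q.finS; exact Quot.finite _
  i := fun x => Quot.mk _ (Sum.inl (P.i x))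
  o := fun z => Quot.mk _ (Sum.inr (Q.o z))
  T := P.T ⊕ Q.T
  finT := by have := P.finT; have := Q.finT; infer_instance
  src := fun τ σ' =>
    match τ with
    | Sum.inl τ => ∑ᶠ (σ : P.S) (_ : Quot.mk (pushoutRel P.o Q.i) (Sum.inl σ) = σ'), P.src τ σ
    | Sum.inr τ => ∑ᶠ (σ : Q.S) (_ : Quot.mk (pushoutRel P.o Q.i) (Sum.inr σ) = σ'), Q.src τ σ
  tgt := fun τ σ' =>
    match τ with
    | Sum.inl τ => ∑ᶠ (σ : P.S) (_ : Quot.mk (pushoutRel P.o Q.i) (Sum.inl σ) = σ'), P.tgt τ σ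
    | Sum.inr τ => ∑ᶠ (σ : Q.S) (_ : Quot.mk (pushoutRel P.o Q.i) (Sum.inr σ) = σ'), Q.tgt τ σ

/-- Tensor (disjoint union) of open Petri nets. -/
def tensor {X Y X' Y' : Type} (P : OpenPetri X Y) (Q : OpenPetri X' Y') :
    OpenPetri (X ⊕ X') (Y ⊕ Y') where
  S := P.S ⊕ Q.S
  finS := by have := P.finS; have := Q.finS; infer_instance
  i := Sum.map P.i Q.i
  o := Sum.map P.o Q.o
  T := P.T ⊕ Q.T
  finT := by have := P.finT; have := Q.finT; infer_instance
  src := fun τ σ =>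
    match τ, σ with
    | Sum.inl τ, Sum.inl σ => P.src τ σ
    | Sum.inr τ, Sum.inr σ => Q.src τ σ
    | _, _ => 0
  tgt := fun τ σ =>
    match τ, σ with
    | Sum.inl τ, Sum.inl σ => P.tgt τ σ
    | Sum.inr τ, Sum.inr σ => Q.tgt τ σ
    | _, _ => 0

/-- Isomorphism of open Petri nets with the same feet: bijections of species
and transitions commuting with the legs and the source/target maps. -/
structure Iso {X Y : Type} (P Q : OpenPetri X Y) where
  eS : P.S ≃ Q.S
  eT : P.T ≃ Q.T
  hi : ∀ x, eS (P.i x) = Q.i x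
  ho : ∀ y, eS (P.o y) = Q.o y
  hsrc : ∀ τ σ, Q.src (eT τ) (eS σ) = P.src τ σ
  htgt : ∀ τ σ, Q.tgt (eT τ) (eS σ) = P.tgt τ σ

/-- A monically open ("mope") Petri net: both legs are injective. -/
def Monic {X Y : Type} (P : OpenPetri X Y) : Prop :=
  Function.Injective P.i ∧ Function.Injective P.o

end OpenPetri

namespace OpenPetri

/-- The single-transition open Petri net `(S →ⁱᵈ S ←ⁱᵈ S)` with one transition
having the given source and target multisets. -/
def single (S : Type) (hS : Finite S) (s t : S → ℕ) : OpenPetri S S :=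
  ⟨S, hS, id, id, PUnit, inferInstance, fun _ => s, fun _ => t⟩

/-- Composite of a list of endo-open-Petri-nets (empty list ↦ identity). -/
noncomputable def compList (S : Type) (hS : Finite S) :
    List (OpenPetri S S) → OpenPetri S S
  | [] => idNet S hS
  | P :: Ps => P.comp (compList S hS Ps)

end OpenPetri

theorem finsum_cond_comp_equiv {A A' B B' M : Type*} [AddCommMonoid M]
    (e : A ≃ A') (e' : B ≃ B') {j : A → B} {j' : A' → B'}
    (hj : ∀ a, j' (e a) = e' (j a)) (f : A' → M) (b : B) :
    ∑ᶠ (a' : A') (_ : j' a' = e' b), f a' = ∑ᶠ (a : A) (_ : j a = b), f (e a) := by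
  rw [← finsum_comp_equiv e]
  simp only [hj, e'.apply_eq_iff_eq]

namespace OpenPetri

def net (S : Type) (hS : Finite S) (T : Type) (fT : Finite T) (s t : T → S → ℕ) :
    OpenPetri S S :=
  ⟨S, hS, id, id, T, fT, s, t⟩

namespace Iso

variable {X Y Z : Type}

def refl (P : OpenPetri X Y) : Iso P P :=
  ⟨Equiv.refl _, Equiv.refl _, fun _ => rfl, fun _ => rfl, fun _ _ => rfl, fun _ _ => rfl⟩

def trans {P Q R : OpenPetri X Y} (f : Iso P Q) (g : Iso Q R) : Iso P R where
  eS := f.eS.trans g.eS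
  eT := f.eT.trans g.eT
  hi x := by simp [f.hi, g.hi]
  ho y := by simp [f.ho, g.ho]
  hsrc τ σ := (g.hsrc (f.eT τ) (f.eS σ)).trans (f.hsrc τ σ)
  htgt τ σ := (g.htgt (f.eT τ) (f.eS σ)).trans (f.htgt τ σ)

def pushoutCongr {P P' : OpenPetri X Y} {Q Q' : OpenPetri Y Z} (f : Iso P P') (g : Iso Q Q') :
    Quot (pushoutRel P.o Q.i) ≃ Quot (pushoutRel P'.o Q'.i) where
  toFun := Quot.map (Sum.map f.eS g.eS) <| by
    rintro _ _ ⟨y, rfl, rfl⟩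
    exact ⟨y, by simp [f.ho y], by simp [g.hi y]⟩
  invFun := Quot.map (Sum.map f.eS.symm g.eS.symm) <| by
    rintro _ _ ⟨y, rfl, rfl⟩
    exact ⟨y, by simp [f.eS.symm_apply_eq.2 (f.ho y).symm],
      by simp [g.eS.symm_apply_eq.2 (g.hi y).symm]⟩
  left_inv := by
    refine Quot.ind ?_
    rintro (a | a) <;> simp [Quot.map]
  right_inv := by
    refine Quot.ind ?_
    rintro (a | a) <;> simp [Quot.map]

noncomputable def compCongr {P P' : OpenPetri X Y} {Q Q' : OpenPetri Y Z}
    (f : Iso P P') (g : Iso Q Q') : Iso (P.comp Q) (P'.comp Q') where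
  eS := pushoutCongr f g
  eT := Equiv.sumCongr f.eT g.eT
  hi x := congrArg (fun σ => Quot.mk _ (Sum.inl σ)) (f.hi x)
  ho z := congrArg (fun σ => Quot.mk _ (Sum.inr σ)) (g.ho z)
  hsrc := by
    rintro (τ | τ) σ
    · exact (finsum_cond_comp_equiv f.eS (pushoutCongr f g) (j := fun a => Quot.mk _ (Sum.inl a))
        (fun _ => rfl) _ σ).trans (finsum_congr fun a => finsum_congr fun _ => f.hsrc τ a)
    · exact (finsum_cond_comp_equiv g.eS (pushoutCongr f g) (j := fun a => Quot.mk _ (Sum.inr a))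
        (fun _ => rfl) _ σ).trans (finsum_congr fun a => finsum_congr fun _ => g.hsrc τ a)
  htgt := by
    rintro (τ | τ) σ
    · exact (finsum_cond_comp_equiv f.eS (pushoutCongr f g) (j := fun a => Quot.mk _ (Sum.inl a))
        (fun _ => rfl) _ σ).trans (finsum_congr fun a => finsum_congr fun _ => f.htgt τ a)
    · exact (finsum_cond_comp_equiv g.eS (pushoutCongr f g) (j := fun a => Quot.mk _ (Sum.inr a))
        (fun _ => rfl) _ σ).trans (finsum_congr fun a => finsum_congr fun _ => g.htgt τ a)

end Iso

def pushoutIdEquiv (S : Type) : Quot (pushoutRel (id : S → S) id) ≃ S where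
  toFun := Quot.lift (Sum.elim id id) (by rintro _ _ ⟨σ, rfl, rfl⟩; rfl)
  invFun σ := Quot.mk _ (Sum.inl σ)
  left_inv := by
    refine Quot.ind ?_
    rintro (σ | σ)
    · rfl
    · exact Quot.sound ⟨σ, rfl, rfl⟩
  right_inv _ := rfl

theorem finsum_cond_pushoutIdEquiv {S : Type} {M : Type*} [AddCommMonoid M] (f : S → M)
    (j : S → Quot (pushoutRel (id : S → S) id))
    (hj : ∀ σ, pushoutIdEquiv S (j σ) = σ) (σ' : Quot (pushoutRel (id : S → S) id)) :
    ∑ᶠ (σ : S) (_ : j σ = σ'), f σ = f (pushoutIdEquiv S σ') := by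
  calc ∑ᶠ (σ : S) (_ : j σ = σ'), f σ
      = ∑ᶠ (σ : S) (_ : σ = pushoutIdEquiv S σ'), f σ :=
        (finsum_cond_comp_equiv (Equiv.refl S) _ (j' := id) (fun σ => (hj σ).symm) f σ').symm
    _ = f (pushoutIdEquiv S σ') := finsum_cond_eq_left

noncomputable def netCompNet (S : Type) (hS : Finite S) {T₁ T₂ : Type} (f₁ : Finite T₁)
    (f₂ : Finite T₂) (s₁ t₁ : T₁ → S → ℕ) (s₂ t₂ : T₂ → S → ℕ) :
    Iso ((net S hS T₁ f₁ s₁ t₁).comp (net S hS T₂ f₂ s₂ t₂))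
      (net S hS (T₁ ⊕ T₂) inferInstance (Sum.elim s₁ s₂) (Sum.elim t₁ t₂)) where
  eS := pushoutIdEquiv S
  eT := Equiv.refl _
  hi _ := rfl
  ho _ := rfl
  hsrc := by
    rintro (τ | τ) σ <;> exact (finsum_cond_pushoutIdEquiv _ _ (fun _ => rfl) σ).symm
  htgt := by
    rintro (τ | τ) σ <;> exact (finsum_cond_pushoutIdEquiv _ _ (fun _ => rfl) σ).symm

def relabel (S : Type) (hS : Finite S) {T T' : Type} (fT : Finite T) (fT' : Finite T')
    {s t : T → S → ℕ} {s' t' : T' → S → ℕ} (e : T ≃ T')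
    (hs : ∀ τ, s' (e τ) = s τ) (ht : ∀ τ, t' (e τ) = t τ) :
    Iso (net S hS T fT s t) (net S hS T' fT' s' t') :=
  ⟨Equiv.refl _, e, fun _ => rfl, fun _ => rfl,
    fun τ σ => congrFun (hs τ) σ, fun τ σ => congrFun (ht τ) σ⟩

noncomputable def compListSingle (S : Type) (hS : Finite S) :
    ∀ (n : ℕ) (s t : Fin n → S → ℕ),
      Iso (compList S hS ((List.finRange n).map fun k => single S hS (s k) (t k)))
        (net S hS (Fin n) inferInstance s t)
  | 0, _, _ =>
      ⟨Equiv.refl _, Equiv.equivOfIsEmpty PEmpty (Fin 0), fun _ => rfl, fun _ => rfl,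
        fun τ _ => τ.elim, fun τ _ => τ.elim⟩
  | n + 1, s, t => by
    rw [List.finRange_succ, List.map_cons, List.map_map]
    exact ((Iso.refl _).compCongr (compListSingle S hS n (s ∘ Fin.succ) (t ∘ Fin.succ))).trans
      ((netCompNet S hS _ _ _ _ _ _).trans
        (relabel S hS _ _ ((Equiv.sumComm _ _).trans
          ((Equiv.optionEquivSumPUnit _).symm.trans (finSuccEquiv n).symm))
          (by rintro (_ | k) <;> simp) (by rintro (_ | k) <;> simp)))

end OpenPetri

open OpenPetri in
theorem stmt_10_general (S : Type) (hS : Finite S) (N : ℕ)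
    (s t : Fin N → S → ℕ) :
    ∀ π : Equiv.Perm (Fin N),
      Nonempty (OpenPetri.Iso
        (compList S hS ((List.finRange N).map fun k => single S hS (s (π k)) (t (π k))))
        (⟨S, hS, id, id, Fin N, inferInstance, s, t⟩ : OpenPetri S S)) :=
  fun π => ⟨(compListSingle S hS N (s ∘ π) (t ∘ π)).trans
    (relabel S hS _ _ π (fun _ => rfl) (fun _ => rfl))⟩

open OpenPetri in
/-- A Petri net `(S, {τ₁,…,τ_N}, s, t)` with identity legs equals the composite
`G₁ ∘ ⋯ ∘ G_N` of its single-transition open Petri nets, and this holds for any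
permutation of the factors: composing the `G_i` in any order yields the same
(i.e. an isomorphic) open Petri net. -/
theorem stmt_10 (S : Type) (hS : Finite S) (N : ℕ) (hN : 0 < N)
    (s t : Fin N → S → ℕ) :
    ∀ π : Equiv.Perm (Fin N),
      Nonempty (OpenPetri.Iso
        (compList S hS ((List.finRange N).map fun k => single S hS (s (π k)) (t (π k))))
        (⟨S, hS, id, id, Fin N, inferInstance, s, t⟩ : OpenPetri S S)) :=
  stmt_10_general S hS N s t
end

section
/- Fix m, n ∈ ℕ. For a Petri net (S, T, s, t) define F_{m,n} to be the number of transitions τ ∈ T such that Σ_{σ ∈ S} s(τ)(σ) = m and Σ_{σ ∈ S} t(τ)(σ) = n. Then F_{m,n} is additive under composition of open Petri nets: if P̄ is the composite of open Petri nets P and P' (pushout of cospans, disjoint union of transitions, source/target multisets pushed forward along the pushout maps), then F_{m,n}(P̄) = F_{m,n}(P) + F_{m,n}(P'). -/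
namespace OpenPetri

/-- The number of input arcs of a transition. -/
noncomputable def arcsIn {X Y : Type} (P : OpenPetri X Y) (τ : P.T) : ℕ :=
  ∑ᶠ σ : P.S, P.src τ σ

/-- The number of output arcs of a transition. -/
noncomputable def arcsOut {X Y : Type} (P : OpenPetri X Y) (τ : P.T) : ℕ :=
  ∑ᶠ σ : P.S, P.tgt τ σ

/-- `F_{m,n}`: the number of transitions with exactly `m` input arcs and `n`
output arcs. -/
noncomputable def Fmn (m n : ℕ) {X Y : Type} (P : OpenPetri X Y) : ℕ :=
  Nat.card {τ : P.T // arcsIn P τ = m ∧ arcsOut P τ = n}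

end OpenPetri

open OpenPetri

private lemma push_finsum {A B : Type} [Finite A] [Finite B] (f : A → B) (g : A → ℕ) :
    ∑ᶠ b : B, ∑ᶠ (a : A) (_ : f a = b), g a = ∑ᶠ a : A, g a := by
  classical
  cases nonempty_fintype A
  cases nonempty_fintype B
  simp only [finsum_eq_if, finsum_eq_sum_of_fintype]
  rw [Finset.sum_comm]
  simp

private lemma comp_arcsIn_inl {X Y Z : Type} (P : OpenPetri X Y) (Q : OpenPetri Y Z) (τ : P.T) :
    arcsIn (P.comp Q) (Sum.inl τ) = arcsIn P τ := by
  have := P.finS; have := Q.finS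
  exact push_finsum (fun σ => Quot.mk (pushoutRel P.o Q.i) (Sum.inl σ)) (P.src τ)

private lemma comp_arcsIn_inr {X Y Z : Type} (P : OpenPetri X Y) (Q : OpenPetri Y Z) (τ : Q.T) :
    arcsIn (P.comp Q) (Sum.inr τ) = arcsIn Q τ := by
  have := P.finS; have := Q.finS
  exact push_finsum (fun σ => Quot.mk (pushoutRel P.o Q.i) (Sum.inr σ)) (Q.src τ)

private lemma comp_arcsOut_inl {X Y Z : Type} (P : OpenPetri X Y) (Q : OpenPetri Y Z) (τ : P.T) :
    arcsOut (P.comp Q) (Sum.inl τ) = arcsOut P τ := by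
  have := P.finS; have := Q.finS
  exact push_finsum (fun σ => Quot.mk (pushoutRel P.o Q.i) (Sum.inl σ)) (P.tgt τ)

private lemma comp_arcsOut_inr {X Y Z : Type} (P : OpenPetri X Y) (Q : OpenPetri Y Z) (τ : Q.T) :
    arcsOut (P.comp Q) (Sum.inr τ) = arcsOut Q τ := by
  have := P.finS; have := Q.finS
  exact push_finsum (fun σ => Quot.mk (pushoutRel P.o Q.i) (Sum.inr σ)) (Q.tgt τ)

/-- `F_{m,n}` is additive under composition of open Petri nets. -/
theorem stmt_11 (m n : ℕ) {X Y Z : Type} (P : OpenPetri X Y) (Q : OpenPetri Y Z) :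
    Fmn m n (P.comp Q) = Fmn m n P + Fmn m n Q := by
  have := P.finT; have := Q.finT
  unfold Fmn
  rw [show {τ : (P.comp Q).T // arcsIn (P.comp Q) τ = m ∧ arcsOut (P.comp Q) τ = n}
      = {τ : P.T ⊕ Q.T // arcsIn (P.comp Q) τ = m ∧ arcsOut (P.comp Q) τ = n} from rfl,
    Nat.card_congr (Equiv.subtypeSum
      (p := fun τ : P.T ⊕ Q.T => arcsIn (P.comp Q) τ = m ∧ arcsOut (P.comp Q) τ = n)),
    Nat.card_sum]
  congr 1
  · exact Nat.card_congr (Equiv.subtypeEquivRight (fun τ => by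
      rw [comp_arcsIn_inl, comp_arcsOut_inl]))
  · exact Nat.card_congr (Equiv.subtypeEquivRight (fun τ => by
      rw [comp_arcsIn_inr, comp_arcsOut_inr]))
end

section
/- Let F be a (not necessarily monoidal) functor from MOPetri (monically open Petri nets) to BM for a cancellative commutative monoid M, and set a_k := F(η_k) and z_k := F(ε_k), where η_k = (0 → k ← k, transitionless) and ε_k = (k → k ← 0, transitionless) are the boundary mope nets. Then: (a) k·(a₁ + z₁) = a_k + z_k for all k ∈ ℕ; (b) for any transitionless mope net (X →ⁱ S ←ᵒ Y, 0_S) with i, o injective, its image F(X →ⁱ S ←ᵒ Y, 0_S) satisfies a_{|S|} + z_{|S|} = F(X →ⁱ S ←ᵒ Y, 0_S) + a_{|X|} + z_{|Y|} in M, i.e. F of it equals (a_{|S|} − a_{|X|}) + (z_{|S|} − z_{|Y|}). -/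
namespace OpenPetri

/-- The boundary mope net `η_S = (0 → S ← S, 0_S)`. -/
def etaNet (S : Type) (hS : Finite S) : OpenPetri PEmpty S :=
  trNet S hS PEmpty.elim id

/-- The boundary mope net `ε_S = (S → S ← 0, 0_S)`. -/
def epsNet (S : Type) (hS : Finite S) : OpenPetri S PEmpty :=
  trNet S hS id PEmpty.elim

end OpenPetri

namespace OpenPetri

/-- The closed net on `S`. -/
def closedNet (S : Type) (hS : Finite S) : OpenPetri PEmpty PEmpty :=
  trNet S hS PEmpty.elim PEmpty.elim

lemma pemptyInj {A : Sort*} (f : PEmpty → A) : Function.Injective f :=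
  fun a => a.elim

/-- Iso between a composite of transitionless nets and a transitionless net,
given an equivalence of the pushout with the target species set. -/
def trIso {X Y Z S1 S2 S3 : Type} (h1 : Finite S1) (h2 : Finite S2) (h3 : Finite S3)
    (i1 : X → S1) (o1 : Y → S1) (i2 : Y → S2) (o2 : Z → S2)
    (i3 : X → S3) (o3 : Z → S3)
    (e : Quot (pushoutRel o1 i2) ≃ S3)
    (hi : ∀ x, e (Quot.mk _ (Sum.inl (i1 x))) = i3 x)
    (ho : ∀ z, e (Quot.mk _ (Sum.inr (o2 z))) = o3 z) :
    Iso ((trNet S1 h1 i1 o1).comp (trNet S2 h2 i2 o2)) (trNet S3 h3 i3 o3) where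
  eS := e
  eT := ⟨Sum.elim PEmpty.elim PEmpty.elim, PEmpty.elim,
    by rintro (t | t) <;> exact t.elim, fun t => t.elim⟩
  hi := hi
  ho := ho
  hsrc := by rintro (t | t) σ <;> exact t.elim
  htgt := by rintro (t | t) σ <;> exact t.elim

def quotEquivLeft {X S : Type} (i : X → S) :
    Quot (pushoutRel (id : X → X) i) ≃ S where
  toFun := Quot.lift (Sum.elim i id) (by rintro a b ⟨y, rfl, rfl⟩; rfl)
  invFun s := Quot.mk _ (Sum.inr s)
  left_inv := by
    apply Quot.ind
    rintro (x | s)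
    · exact (Quot.sound ⟨x, rfl, rfl⟩).symm
    · rfl
  right_inv s := rfl

def quotEquivRight {Y S : Type} (o : Y → S) :
    Quot (pushoutRel o (id : Y → Y)) ≃ S where
  toFun := Quot.lift (Sum.elim id o) (by rintro a b ⟨y, rfl, rfl⟩; rfl)
  invFun s := Quot.mk _ (Sum.inl s)
  left_inv := by
    apply Quot.ind
    rintro (s | y)
    · rfl
    · exact Quot.sound ⟨y, rfl, rfl⟩
  right_inv s := rfl

def quotEquivDisj {A B : Type} :
    Quot (pushoutRel (PEmpty.elim : PEmpty → A) (PEmpty.elim : PEmpty → B)) ≃ A ⊕ B where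
  toFun := Quot.lift id (by rintro a b ⟨⟨⟩, -⟩)
  invFun := Quot.mk _
  left_inv := by apply Quot.ind; intro a; rfl
  right_inv a := rfl

end OpenPetri

open OpenPetri in
/-- Let `F` be a functor from `MOPetri` to `BM` for a cancellative commutative
monoid `M`, and put `a_k := F (η_k)`, `z_k := F (ε_k)`. Then:
(a) `k • (a₁ + z₁) = a_k + z_k` for all `k`;
(b) for any transitionless mope net `(X →ⁱ S ←ᵒ Y, 0_S)` with `i, o` injective,
`F` of it equals `(a_{|S|} − a_{|X|}) + (z_{|S|} − z_{|Y|})`, i.e. (after adding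
`a_{|X|} + z_{|Y|}` to both sides) `a_{|S|} + z_{|S|} = F(·) + a_{|X|} + z_{|Y|}`. -/
theorem stmt_15 (M : Type*) [AddCancelCommMonoid M]
    (F : ∀ {X Y : Type} [Finite X] [Finite Y], OpenPetri X Y → M)
    (hid : ∀ (S : Type) (hS : Finite S), F (idNet S hS) = 0)
    (hcomp : ∀ {X Y Z : Type} [Finite X] [Finite Y] [Finite Z]
      (P : OpenPetri X Y) (Q : OpenPetri Y Z), P.Monic → Q.Monic →
      F (P.comp Q) = F P + F Q)
    (hiso : ∀ {X Y : Type} [Finite X] [Finite Y] (P Q : OpenPetri X Y),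
      Nonempty (OpenPetri.Iso P Q) → F P = F Q) :
    (∀ k : ℕ,
      k • (F (etaNet (Fin 1) inferInstance) + F (epsNet (Fin 1) inferInstance)) =
        F (etaNet (Fin k) inferInstance) + F (epsNet (Fin k) inferInstance)) ∧
    (∀ {X Y : Type} [Finite X] [Finite Y] (S : Type) (hS : Finite S)
      (i : X → S) (o : Y → S), Function.Injective i → Function.Injective o →
      F (etaNet S hS) + F (epsNet S hS) =
        F (trNet S hS i o) +
          (F (etaNet X inferInstance) + F (epsNet Y inferInstance))) := by

  classical
  -- Monicity helpers
  have monicEta : ∀ (S : Type) (hS : Finite S), (etaNet S hS).Monic :=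
    fun S hS => ⟨pemptyInj _, fun a b h => h⟩
  have monicEps : ∀ (S : Type) (hS : Finite S), (epsNet S hS).Monic :=
    fun S hS => ⟨fun a b h => h, pemptyInj _⟩
  have monicClosed : ∀ (S : Type) (hS : Finite S), (closedNet S hS).Monic :=
    fun S hS => ⟨pemptyInj _, pemptyInj _⟩
  -- key: F of the closed net on S splits as eta_X + trNet + eps_Y
  have key : ∀ {X Y : Type} [Finite X] [Finite Y] (S : Type) (hS : Finite S)
      (i : X → S) (o : Y → S), Function.Injective i → Function.Injective o →
      F (closedNet S hS) =
        F (etaNet X inferInstance) + F (trNet S hS i o) + F (epsNet Y inferInstance) := by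
    intro X Y _ _ S hS i o hi ho
    have h1 : F ((etaNet X inferInstance).comp (trNet S hS i o)) =
        F (etaNet X inferInstance) + F (trNet S hS i o) :=
      hcomp _ _ (monicEta X inferInstance) ⟨hi, ho⟩
    have e1 : F ((etaNet X inferInstance).comp (trNet S hS i o)) =
        F (trNet S hS PEmpty.elim o) :=
      hiso _ _ ⟨trIso _ _ _ _ _ _ _ _ _ (quotEquivLeft i)
        (fun x => x.elim) (fun z => rfl)⟩
    have h2 : F ((trNet S hS PEmpty.elim o).comp (epsNet Y inferInstance)) =
        F (trNet S hS PEmpty.elim o) + F (epsNet Y inferInstance) :=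
      hcomp _ _ ⟨pemptyInj _, ho⟩ (monicEps Y inferInstance)
    have e2 : F ((trNet S hS PEmpty.elim o).comp (epsNet Y inferInstance)) =
        F (closedNet S hS) :=
      hiso _ _ ⟨trIso _ _ _ _ _ _ _ _ _ (quotEquivRight o)
        (fun x => x.elim) (fun z => z.elim)⟩
    rw [← e2, h2, ← e1, h1]
  -- eta_S + eps_S = closed_S
  have hcl : ∀ (S : Type) (hS : Finite S),
      F (etaNet S hS) + F (epsNet S hS) = F (closedNet S hS) := by
    intro S hS
    have h := key S hS id id (fun a b h => h) (fun a b h => h)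
    rw [show trNet S hS id id = idNet S hS from rfl, hid, add_zero] at h
    exact h.symm
  -- closed nets add under disjoint union
  have hsum : ∀ (A B S3 : Type) (hA : Finite A) (hB : Finite B) (h3 : Finite S3)
      (e : A ⊕ B ≃ S3),
      F (closedNet S3 h3) = F (closedNet A hA) + F (closedNet B hB) := by
    intro A B S3 hA hB h3 e
    have h := hcomp (closedNet A hA) (closedNet B hB)
      (monicClosed A hA) (monicClosed B hB)
    have e1 : F ((closedNet A hA).comp (closedNet B hB)) = F (closedNet S3 h3) :=
      hiso _ _ ⟨trIso _ _ _ _ _ _ _ _ _ (quotEquivDisj.trans e)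
        (fun x => x.elim) (fun z => z.elim)⟩
    rw [← e1, h]
  -- closed net on empty set is zero
  have hzero : F (closedNet (Fin 0) inferInstance) = 0 := by
    have e0 : F (closedNet (Fin 0) inferInstance) = F (idNet PEmpty inferInstance) := by
      refine hiso _ _ ⟨⟨Equiv.equivPEmpty (Fin 0), Equiv.refl _, ?_, ?_, ?_, ?_⟩⟩
      · exact fun x => x.elim
      · exact fun y => y.elim
      · exact fun t σ => t.elim
      · exact fun t σ => t.elim
    rw [e0, hid]
  -- closed net on Fin k
  have hind : ∀ k : ℕ, F (closedNet (Fin k) inferInstance) =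
      k • (F (etaNet (Fin 1) inferInstance) + F (epsNet (Fin 1) inferInstance)) := by
    intro k
    induction k with
    | zero => simpa using hzero
    | succ k ih =>
      rw [hsum (Fin k) (Fin 1) (Fin (k + 1)) inferInstance inferInstance inferInstance
        finSumFinEquiv, ih, hcl (Fin 1) inferInstance, succ_nsmul]
  constructor
  · intro k
    rw [hcl (Fin k) inferInstance, hind k]
  · intro X Y _ _ S hS i o hi ho
    rw [hcl S hS, key S hS i o hi ho]
    abel
end

section
/- Let a, z : ℕ → ℕ be non-decreasing with k·(a 1 + z 1) = a k + z k for all k, let d : BodyTypes → ℕ be a finitely supported assignment of coefficients, and define G := F_{a,z} + Σ_β d(β)·F_β on mope nets, where F_{a,z}(X → S ← Y, P) = (a_{|S|} − a_{|X|}) + (z_{|S|} − z_{|Y|}) and F_β counts transitions of body type β. Then G is an additive invariant: G(identity) = 0 and G(M ∘ M') = G(M) + G(M') for composable mope nets M, M'. -/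
namespace OpenPetri

/-- The body type of a transition: the multiset of pairs
`(s(τ)(σ), t(τ)(σ))` over the species `σ` participating in `τ`. -/
noncomputable def bodyType {X Y : Type} (P : OpenPetri X Y) (τ : P.T) :
    Multiset (ℕ × ℕ) :=
  haveI := P.finS
  haveI := Fintype.ofFinite P.S
  Multiset.filter (fun p => p ≠ (0, 0))
    (Finset.univ.val.map fun σ => (P.src τ σ, P.tgt τ σ))

/-- `F_β`: the number of transitions of body type `β`. -/
noncomputable def Fbt (β : Multiset (ℕ × ℕ)) {X Y : Type} (P : OpenPetri X Y) : ℕ :=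
  Nat.card {τ : P.T // bodyType P τ = β}

/-- `F_{a,z}`: the boundary invariant
`(a_{|S|} − a_{|X|}) + (z_{|S|} − z_{|Y|})` (truncated subtraction). -/
noncomputable def Faz (a z : ℕ → ℕ) {X Y : Type} (P : OpenPetri X Y) : ℕ :=
  (a (Nat.card P.S) - a (Nat.card X)) + (z (Nat.card P.S) - z (Nat.card Y))

/-- The combined invariant `G = F_{a,z} + Σ_β d(β)·F_β`. -/
noncomputable def Gfun (a z : ℕ → ℕ) (d : Multiset (ℕ × ℕ) →₀ ℕ)
    {X Y : Type} (P : OpenPetri X Y) : ℕ :=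
  Faz a z P + d.sum fun β c => c * Fbt β P

end OpenPetri

/-!
Along a monic leg `i' : Y → S'` the pushout of `S ← Y → S'` is `S` together with the species of
`S'` outside the image of `Y`, so it has `|S| + |S'| - |Y|` elements, and when `o : Y → S` is
monic too, both maps into it are injective. A transition of the composite is one of a factor,
with its input and output multisets extended by zero along such an injection, so its body type
is unchanged and each `F_β` is additive. For `F_{a,z}`, the linearity of `k ↦ a k + z k` turns
the species count into the required identity.
-/

/-- Multiplying `k + y = m + n` by `a 1 + z 1` gives
`a k + z k + (a y + z y) = a m + z m + (a n + z n)`; monotonicity makes every truncated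
subtraction exact. -/
lemma tsub_add_tsub_eq_of_linear {a z : ℕ → ℕ} (ha : Monotone a) (hz : Monotone z)
    (hcond : ∀ k : ℕ, k * (a 1 + z 1) = a k + z k) {k m n x y w : ℕ} (hk : k + y = m + n)
    (hxm : x ≤ m) (hym : y ≤ m) (hyn : y ≤ n) (hwn : w ≤ n) :
    a k - a x + (z k - z w) = a m - a x + (z m - z y) + (a n - a y + (z n - z w)) := by
  have hsum : a k + z k + (a y + z y) = a m + z m + (a n + z n) := by
    rw [← hcond k, ← hcond y, ← hcond m, ← hcond n, ← add_mul, ← add_mul, hk]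
  have := ha hxm; have := ha hyn; have := ha (show m ≤ k by omega)
  have := hz hym; have := hz hwn; have := hz (show n ≤ k by omega)
  omega

open Function

lemma finsum_fiber_eq_extend {A B M : Type*} [AddCommMonoid M] {g : A → B} (hg : Injective g)
    (v : A → M) (b : B) : ∑ᶠ (a) (_ : g a = b), v a = extend g v 0 b := by
  classical
  simp_rw [finsum_eq_if]
  by_cases hb : ∃ a, g a = b
  · obtain ⟨a, rfl⟩ := hb
    rw [hg.extend_apply, finsum_eq_single _ a fun a' ha' => if_neg (hg.ne ha'), if_pos rfl]
  · rw [extend_apply' _ _ _ hb]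
    exact finsum_eq_zero_of_forall_eq_zero fun a => if_neg fun h => hb ⟨a, h⟩

lemma filter_map_univ_eq_of_injective {A B M : Type*} [Fintype A] [Fintype B] {f : A → B}
    (hf : Injective f) (G : B → M) (p : M → Prop) [DecidablePred p]
    (hG : ∀ b ∉ Set.range f, ¬p (G b)) :
    (Finset.univ.val.map G).filter p = (Finset.univ.val.map (G ∘ f)).filter p := by
  have hsupp : Finset.univ.filter (p ∘ G) = (Finset.univ.filter (p ∘ G ∘ f)).map ⟨f, hf⟩ := by
    ext b
    simp only [Finset.mem_filter, Finset.mem_univ, true_and, Finset.mem_map,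
      Embedding.coeFn_mk, comp_apply]
    refine ⟨fun hb => ?_, fun ⟨a, ha, hab⟩ => hab ▸ ha⟩
    by_contra! h
    exact hG b (fun ⟨a, hab⟩ => h a (hab ▸ hb) hab) hb
  rw [Multiset.filter_map, Multiset.filter_map, ← Finset.filter_val, hsupp, Finset.map_val,
    Multiset.map_map, Finset.filter_val]
  rfl

namespace OpenPetri

lemma bodyType_eq_of_injective {X Y X' Y' : Type} {P : OpenPetri X Y} {Q : OpenPetri X' Y'}
    {f : P.S → Q.S} (hf : Injective f) {τ : P.T} {τ' : Q.T}
    (hsrc : Q.src τ' = extend f (P.src τ) 0) (htgt : Q.tgt τ' = extend f (P.tgt τ) 0) :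
    bodyType Q τ' = bodyType P τ := by
  have := P.finS
  have := Q.finS
  let := Fintype.ofFinite P.S
  let := Fintype.ofFinite Q.S
  refine (filter_map_univ_eq_of_injective hf _ _ fun σ' hσ' => ?_).trans ?_
  · simp [hsrc, htgt, extend_apply' _ _ _ hσ']
  · simp only [comp_def, hsrc, htgt, hf.extend_apply]
    rfl

section Pushout

variable {Y S S' : Type} (o : Y → S) (i' : Y → S')

open Classical in
noncomputable def pushoutToSum : S ⊕ S' → S ⊕ {s' : S' // s' ∉ Set.range i'} :=
  Sum.elim Sum.inl fun s' =>
    if h : s' ∈ Set.range i' then Sum.inl (o h.choose) else Sum.inr ⟨s', h⟩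

variable {o i'}

lemma pushoutToSum_inr_apply (hi : Injective i') (y : Y) :
    pushoutToSum o i' (Sum.inr (i' y)) = Sum.inl (o y) := by
  have h : i' y ∈ Set.range i' := ⟨y, rfl⟩
  simp only [pushoutToSum, Sum.elim_inr, dif_pos h, hi h.choose_spec]

lemma pushoutToSum_inr_of_notMem {s' : S'} (h : s' ∉ Set.range i') :
    pushoutToSum o i' (Sum.inr s') = Sum.inr ⟨s', h⟩ := by
  simp only [pushoutToSum, Sum.elim_inr, dif_neg h]

lemma pushoutToSum_inr_injective (ho : Injective o) (hi : Injective i') :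
    Injective fun s' => pushoutToSum o i' (Sum.inr s') := by
  intro s₁ s₂ h
  by_cases h₁ : s₁ ∈ Set.range i' <;> by_cases h₂ : s₂ ∈ Set.range i'
  · obtain ⟨y₁, rfl⟩ := h₁
    obtain ⟨y₂, rfl⟩ := h₂
    simp only [pushoutToSum_inr_apply hi, Sum.inl.injEq] at h
    rw [ho h]
  · obtain ⟨y₁, rfl⟩ := h₁
    simp [pushoutToSum_inr_apply hi, pushoutToSum_inr_of_notMem h₂] at h
  · obtain ⟨y₂, rfl⟩ := h₂
    simp [pushoutToSum_inr_apply hi, pushoutToSum_inr_of_notMem h₁] at h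
  · simpa [pushoutToSum_inr_of_notMem, h₁, h₂] using h

variable (o) in
noncomputable def pushoutEquiv (hi : Injective i') :
    Quot (pushoutRel o i') ≃ S ⊕ {s' : S' // s' ∉ Set.range i'} where
  toFun := Quot.lift (pushoutToSum o i') fun _ _ ⟨y, hx, hy⟩ => by
    rw [hx, hy, pushoutToSum_inr_apply hi]; rfl
  invFun := Sum.elim (fun s => Quot.mk _ (Sum.inl s)) fun s' => Quot.mk _ (Sum.inr s'.1)
  left_inv := by
    refine Quot.ind ?_
    rintro (s | s')
    · rfl
    · by_cases h : s' ∈ Set.range i'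
      · obtain ⟨y, rfl⟩ := h
        show Sum.elim _ _ (pushoutToSum o i' (Sum.inr (i' y))) = _
        rw [pushoutToSum_inr_apply hi]
        exact Quot.sound ⟨y, rfl, rfl⟩
      · show Sum.elim _ _ (pushoutToSum o i' (Sum.inr s')) = _
        rw [pushoutToSum_inr_of_notMem h]
        rfl
  right_inv := by
    rintro (s | ⟨s', h⟩)
    · rfl
    · exact pushoutToSum_inr_of_notMem h

lemma pushout_inl_injective (hi : Injective i') :
    Injective fun s => Quot.mk (pushoutRel o i') (Sum.inl s) :=
  fun _ _ h => Sum.inl_injective (congrArg (pushoutEquiv o hi) h)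

lemma pushout_inr_injective (ho : Injective o) (hi : Injective i') :
    Injective fun s' => Quot.mk (pushoutRel o i') (Sum.inr s') :=
  fun _ _ h => pushoutToSum_inr_injective ho hi (congrArg (pushoutEquiv o hi) h)

lemma card_pushout_add_card [Finite S] [Finite S'] (hi : Injective i') :
    Nat.card (Quot (pushoutRel o i')) + Nat.card Y = Nat.card S + Nat.card S' := by
  classical
  rw [Nat.card_congr (pushoutEquiv o hi), Nat.card_sum, add_assoc,
    ← Nat.card_range_of_injective hi, ← Nat.card_sum,
    Nat.card_congr ((Equiv.sumComm _ _).trans (Equiv.sumCompl (· ∈ Set.range i')))]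

end Pushout

section Comp

variable {X Y Z : Type} (P : OpenPetri X Y) (Q : OpenPetri Y Z)

lemma bodyType_comp_inl (hQ : Injective Q.i) (τ : P.T) :
    (P.comp Q).bodyType (Sum.inl τ) = P.bodyType τ :=
  bodyType_eq_of_injective (pushout_inl_injective hQ)
    (funext (finsum_fiber_eq_extend (pushout_inl_injective hQ) _))
    (funext (finsum_fiber_eq_extend (pushout_inl_injective hQ) _))

lemma bodyType_comp_inr (hP : Injective P.o) (hQ : Injective Q.i) (τ : Q.T) :
    (P.comp Q).bodyType (Sum.inr τ) = Q.bodyType τ :=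
  bodyType_eq_of_injective (pushout_inr_injective hP hQ)
    (funext (finsum_fiber_eq_extend (pushout_inr_injective hP hQ) _))
    (funext (finsum_fiber_eq_extend (pushout_inr_injective hP hQ) _))

lemma Fbt_comp (β : Multiset (ℕ × ℕ)) (hP : Injective P.o) (hQ : Injective Q.i) :
    Fbt β (P.comp Q) = Fbt β P + Fbt β Q := by
  have := P.finT
  have := Q.finT
  calc Fbt β (P.comp Q)
      = Nat.card ({τ : P.T // P.bodyType τ = β} ⊕ {τ : Q.T // Q.bodyType τ = β}) :=
        Nat.card_congr <| Equiv.subtypeSum.trans <| Equiv.sumCongr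
          (Equiv.subtypeEquivRight fun τ => by rw [bodyType_comp_inl P Q hQ])
          (Equiv.subtypeEquivRight fun τ => by rw [bodyType_comp_inr P Q hP hQ])
    _ = Fbt β P + Fbt β Q := Nat.card_sum

lemma card_comp_add_card (hQ : Injective Q.i) :
    Nat.card (P.comp Q).S + Nat.card Y = Nat.card P.S + Nat.card Q.S := by
  have := P.finS
  have := Q.finS
  exact card_pushout_add_card hQ

lemma Faz_comp {a z : ℕ → ℕ} (ha : Monotone a) (hz : Monotone z)
    (hcond : ∀ k : ℕ, k * (a 1 + z 1) = a k + z k) (hP : P.Monic) (hQ : Q.Monic) :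
    Faz a z (P.comp Q) = Faz a z P + Faz a z Q := by
  have := P.finS
  have := Q.finS
  exact tsub_add_tsub_eq_of_linear ha hz hcond (card_comp_add_card P Q hQ.1)
    (Nat.card_le_card_of_injective _ hP.1) (Nat.card_le_card_of_injective _ hP.2)
    (Nat.card_le_card_of_injective _ hQ.1) (Nat.card_le_card_of_injective _ hQ.2)

lemma Gfun_comp {a z : ℕ → ℕ} (ha : Monotone a) (hz : Monotone z)
    (hcond : ∀ k : ℕ, k * (a 1 + z 1) = a k + z k) (d : Multiset (ℕ × ℕ) →₀ ℕ)
    (hP : P.Monic) (hQ : Q.Monic) :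
    Gfun a z d (P.comp Q) = Gfun a z d P + Gfun a z d Q := by
  have hFbt (β : Multiset (ℕ × ℕ)) := Fbt_comp P Q β hP.2 hQ.1
  simp only [Gfun, Faz_comp P Q ha hz hcond hP hQ, hFbt, mul_add, Finsupp.sum_add]
  ring

end Comp

lemma Gfun_idNet (a z : ℕ → ℕ) (d : Multiset (ℕ × ℕ) →₀ ℕ) (S : Type) (hS : Finite S) :
    Gfun a z d (idNet S hS) = 0 := by
  have hFbt (β : Multiset (ℕ × ℕ)) : Fbt β (idNet S hS) = 0 :=
    Nat.card_of_isEmpty (α := {τ : PEmpty // _})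
  have hFaz : Faz a z (idNet S hS) = 0 := by simp [Faz, idNet, trNet]
  simp [Gfun, hFaz, hFbt]

end OpenPetri

open OpenPetri in
/-- For non-decreasing `a, z : ℕ → ℕ` with `k·(a 1 + z 1) = a k + z k` and a
finitely supported assignment of coefficients `d`, the invariant
`G = F_{a,z} + Σ_β d(β)·F_β` is an additive invariant of mope nets:
it vanishes on identities and is additive under composition. -/
theorem stmt_16 (a z : ℕ → ℕ) (ha : Monotone a) (hz : Monotone z)
    (hcond : ∀ k : ℕ, k * (a 1 + z 1) = a k + z k)
    (d : Multiset (ℕ × ℕ) →₀ ℕ) :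
    (∀ (S : Type) (hS : Finite S), Gfun a z d (idNet S hS) = 0) ∧
    (∀ {X Y Z : Type} [Finite X] [Finite Y] [Finite Z]
      (P : OpenPetri X Y) (Q : OpenPetri Y Z), P.Monic → Q.Monic →
      Gfun a z d (P.comp Q) = Gfun a z d P + Gfun a z d Q) :=
  ⟨Gfun_idNet a z d, fun P Q hP hQ => Gfun_comp P Q ha hz hcond d hP hQ⟩
end

section
/- For composable monically open Petri nets M = (X → S ← Y, P) and M' = (Y → S' ← Z, P') (all four legs injective), the composite mope net M ∘ M' has exactly |S| + |S'| − |Y| species, and its cospan legs X → S +_Y S' and Z → S +_Y S' are again injective. -/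
open OpenPetri in
/-- For composable monically open Petri nets `M = (X → S ← Y, P)` and
`M' = (Y → S' ← Z, P')`, the composite has exactly `|S| + |S'| − |Y|` species
and its legs are again injective. -/
theorem stmt_17 {X Y Z : Type} [Finite X] [Finite Y] [Finite Z]
    (P : OpenPetri X Y) (Q : OpenPetri Y Z) (hP : P.Monic) (hQ : Q.Monic) :
    Nat.card (P.comp Q).S = Nat.card P.S + Nat.card Q.S - Nat.card Y ∧
    Function.Injective (P.comp Q).i ∧ Function.Injective (P.comp Q).o := by
  classical
  obtain ⟨hPi, hPo⟩ := hP
  obtain ⟨hQi, hQo⟩ := hQ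
  have : Finite P.S := P.finS
  have : Finite Q.S := Q.finS
  set R := pushoutRel P.o Q.i with hRdef
  let f : P.S ⊕ Q.S → P.S ⊕ {s' : Q.S // s' ∉ Set.range Q.i} := fun a =>
    match a with
    | Sum.inl s => Sum.inl s
    | Sum.inr s' =>
        if h : s' ∈ Set.range Q.i then Sum.inl (P.o h.choose) else Sum.inr ⟨s', h⟩
  have hf : ∀ a b, R a b → f a = f b := by
    rintro a b ⟨y, rfl, rfl⟩
    have hy : Q.i y ∈ Set.range Q.i := ⟨y, rfl⟩
    simp only [f, dif_pos hy]
    have : hy.choose = y := hQi hy.choose_spec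
    rw [this]
  let F : Quot R → P.S ⊕ {s' : Q.S // s' ∉ Set.range Q.i} := Quot.lift f hf
  have hFl : ∀ s, F (Quot.mk R (Sum.inl s)) = Sum.inl s := fun s => rfl
  -- injectivity of inr composed with Quot.mk
  have hinr : Function.Injective (fun s' : Q.S => Quot.mk R (Sum.inr s')) := by
    intro s1 s2 h
    have h2 := congrArg F h
    simp only [F, f, Quot.lift_mk] at h2
    by_cases h1 : s1 ∈ Set.range Q.i <;> by_cases h3 : s2 ∈ Set.range Q.i <;>
      simp [h1, h3] at h2
    · have : h1.choose = h3.choose := hPo h2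
      rw [← h1.choose_spec, ← h3.choose_spec, this]
    · exact h2
  have hinl : Function.Injective (fun s : P.S => Quot.mk R (Sum.inl s)) := by
    intro s1 s2 h
    have h2 := congrArg F h
    simpa [F, f] using h2
  -- equivalence
  let e : Quot R ≃ (P.S ⊕ {s' : Q.S // s' ∉ Set.range Q.i}) :=
    { toFun := F
      invFun := fun a =>
        match a with
        | Sum.inl s => Quot.mk R (Sum.inl s)
        | Sum.inr s' => Quot.mk R (Sum.inr s'.1)
      left_inv := by
        intro q
        induction q using Quot.ind with
        | _ a =>
          cases a with
          | inl s => simp only [F, f, Quot.lift_mk]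
          | inr s' =>
            by_cases h : s' ∈ Set.range Q.i
            · simp only [F, f, Quot.lift_mk, dif_pos h]
              have : R (Sum.inl (P.o h.choose)) (Sum.inr s') :=
                ⟨h.choose, rfl, by rw [h.choose_spec]⟩
              exact Quot.sound this
            · simp only [F, f, Quot.lift_mk, dif_neg h]
      right_inv := by
        rintro (s | ⟨s', h⟩)
        · rfl
        · simp only [F, f, Quot.lift_mk, dif_neg h] }
  refine ⟨?_, ?_, ?_⟩
  · have hcard : Nat.card (P.comp Q).S =
        Nat.card (P.S ⊕ {s' : Q.S // s' ∉ Set.range Q.i}) := Nat.card_congr e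
    rw [hcard, Nat.card_sum]
    have h1 : Nat.card {s' : Q.S // s' ∉ Set.range Q.i} =
        Nat.card Q.S - Nat.card Y := by
      have hr : Nat.card (Set.range Q.i) = Nat.card Y :=
        Nat.card_range_of_injective hQi
      have := Set.ncard_add_ncard_compl (Set.range Q.i)
        (Set.toFinite _) (Set.toFinite _)
      have h2 : Nat.card {s' : Q.S // s' ∉ Set.range Q.i} =
          Nat.card ↥(Set.range Q.i)ᶜ := rfl
      rw [Nat.card_coe_set_eq] at hr
      rw [h2, Nat.card_coe_set_eq]
      omega
    rw [h1]
    have hle : Nat.card Y ≤ Nat.card Q.S := Nat.card_le_card_of_injective _ hQi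
    omega
  · intro x1 x2 h
    exact hPi (hinl h)
  · intro z1 z2 h
    exact hQo (hinr h)
end

section
/- Let M be a cancellative commutative monoid with only trivial units and let F be a functor from MOPetri to BM. Then for any endomorphism mope net N (with equal domain and codomain X) and any finite set K, F(N ⊕ id_K) = F(N). -/
/-! Let `ι : X → X ⊕ K` be the transitionless mope net with legs `inl` and `id`. Both `N ; ι` and
`ι ; (N ⊕ id_K)` are isomorphic to `N` with `K` adjoined to its species and to its output foot,
so functoriality gives `F N + F ι = F ι + F (N ⊕ id_K)`, and `F ι` cancels. -/

theorem Function.Injective.finsum_cond_eq_extend {A B : Type} {g : A → B}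
    (hg : Function.Injective g) (h : A → ℕ) (b : B) :
    ∑ᶠ (a : A) (_ : g a = b), h a = Function.extend g h 0 b := by
  by_cases hb : ∃ a, g a = b
  · obtain ⟨a, rfl⟩ := hb
    simp only [hg.eq_iff, finsum_cond_eq_left, hg.extend_apply]
  · rw [Function.extend_apply' _ _ _ hb]
    simp [not_exists.mp hb]

namespace OpenPetri

open Function

theorem nonempty_iso_comp {X Y Z : Type} (P : OpenPetri X Y) (Q : OpenPetri Y Z)
    (E : OpenPetri X Z) (f : P.S ⊕ Q.S → E.S) (g : E.S → P.S ⊕ Q.S)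
    (hf : ∀ y, f (.inl (P.o y)) = f (.inr (Q.i y))) (hfg : LeftInverse f g)
    (hgf : ∀ a, Quot.mk (pushoutRel P.o Q.i) (g (f a)) = Quot.mk _ a)
    (eT : P.T ⊕ Q.T ≃ E.T) (hi : ∀ x, f (.inl (P.i x)) = E.i x)
    (ho : ∀ z, f (.inr (Q.o z)) = E.o z)
    (hsrcP : ∀ τ s, E.src (eT (.inl τ)) s = ∑ᶠ (σ) (_ : f (.inl σ) = s), P.src τ σ)
    (hsrcQ : ∀ τ s, E.src (eT (.inr τ)) s = ∑ᶠ (σ) (_ : f (.inr σ) = s), Q.src τ σ)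
    (htgtP : ∀ τ s, E.tgt (eT (.inl τ)) s = ∑ᶠ (σ) (_ : f (.inl σ) = s), P.tgt τ σ)
    (htgtQ : ∀ τ s, E.tgt (eT (.inr τ)) s = ∑ᶠ (σ) (_ : f (.inr σ) = s), Q.tgt τ σ) :
    Nonempty (Iso (P.comp Q) E) := by
  have hrel : ∀ a b, pushoutRel P.o Q.i a b → f a = f b := by
    rintro _ _ ⟨y, rfl, rfl⟩
    exact hf y
  let eS : (P.comp Q).S ≃ E.S :=
    { toFun := Quot.lift f hrel
      invFun := fun s => Quot.mk _ (g s)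
      left_inv := Quot.ind hgf
      right_inv := hfg }
  have mk_eq_mk_iff : ∀ a b, Quot.mk (pushoutRel P.o Q.i) a = Quot.mk _ b ↔ f a = f b :=
    fun a b => eS.injective.eq_iff.symm
  refine ⟨⟨eS, eT, hi, ho, ?_, ?_⟩⟩ <;> rintro (τ | τ) ⟨a⟩ <;> simp only [comp, mk_eq_mk_iff]
  exacts [hsrcP τ (f a), hsrcQ τ (f a), htgtP τ (f a), htgtQ τ (f a)]

theorem Monic.tensor {X Y X' Y' : Type} {P : OpenPetri X Y} {Q : OpenPetri X' Y'}
    (hP : P.Monic) (hQ : Q.Monic) : (P.tensor Q).Monic :=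
  ⟨Sum.map_injective.mpr ⟨hP.1, hQ.1⟩, Sum.map_injective.mpr ⟨hP.2, hQ.2⟩⟩

theorem idNet_monic (S : Type) (hS : Finite S) : (idNet S hS).Monic :=
  ⟨injective_id, injective_id⟩

theorem tensor_src_inl {X Y X' Y' : Type} (P : OpenPetri X Y) (Q : OpenPetri X' Y') (τ : P.T) :
    (P.tensor Q).src (.inl τ) = extend Sum.inl (P.src τ) 0 := by
  funext σ
  cases σ <;> simp [tensor, Sum.inl_injective.extend_apply, extend_apply']

theorem tensor_tgt_inl {X Y X' Y' : Type} (P : OpenPetri X Y) (Q : OpenPetri X' Y') (τ : P.T) :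
    (P.tensor Q).tgt (.inl τ) = extend Sum.inl (P.tgt τ) 0 := by
  funext σ
  cases σ <;> simp [tensor, Sum.inl_injective.extend_apply, extend_apply']

def inlNet (X K : Type) [Finite X] [Finite K] : OpenPetri X (X ⊕ K) :=
  trNet (X ⊕ K) inferInstance Sum.inl id

theorem inlNet_monic (X K : Type) [Finite X] [Finite K] : (inlNet X K).Monic :=
  ⟨Sum.inl_injective, injective_id⟩

noncomputable def extendOut {X : Type} (N : OpenPetri X X) (K : Type) [Finite K] :
    OpenPetri X (X ⊕ K) where
  S := N.S ⊕ K
  finS := by have := N.finS; infer_instance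
  i := Sum.inl ∘ N.i
  o := Sum.map N.o id
  T := N.T
  finT := N.finT
  src τ := extend Sum.inl (N.src τ) 0
  tgt τ := extend Sum.inl (N.tgt τ) 0

theorem nonempty_iso_comp_inlNet {X : Type} [Finite X] (N : OpenPetri X X)
    (K : Type) [Finite K] :
    Nonempty (Iso (N.comp (inlNet X K)) (N.extendOut K)) := by
  refine nonempty_iso_comp _ _ _ (Sum.elim Sum.inl (Sum.map N.o id)) (Sum.map id Sum.inr)
    (fun y => rfl) (by rintro (s | k) <;> rfl) ?_ (Equiv.sumEmpty N.T PEmpty)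
    (fun x => rfl) (fun z => rfl)
    (fun τ s => (Sum.inl_injective.finsum_cond_eq_extend _ s).symm) (fun τ => τ.elim)
    (fun τ s => (Sum.inl_injective.finsum_cond_eq_extend _ s).symm) (fun τ => τ.elim)
  rintro (s | x | k)
  · rfl
  · exact Quot.sound ⟨x, rfl, rfl⟩
  · rfl

theorem nonempty_iso_inlNet_comp_tensor {X : Type} [Finite X] (N : OpenPetri X X) (K : Type)
    (hK : Finite K) :
    Nonempty (Iso ((inlNet X K).comp (N.tensor (idNet K hK))) (N.extendOut K)) := by
  refine nonempty_iso_comp _ _ _ (Sum.elim (Sum.map N.i id) id) Sum.inr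
    (fun y => rfl) (fun s => rfl) ?_ ((Equiv.emptySum PEmpty _).trans (Equiv.sumEmpty N.T PEmpty))
    (fun x => rfl) (fun z => rfl) (fun τ => τ.elim) ?_ (fun τ => τ.elim) ?_
  · rintro (x | s)
    · exact (Quot.sound ⟨x, rfl, rfl⟩).symm
    · rfl
  · rintro (τ | τ) s
    · rw [tensor_src_inl]
      exact (finsum_cond_eq_left (f := extend Sum.inl (N.src τ) 0) (a := s)).symm
    · exact τ.elim
  · rintro (τ | τ) s
    · rw [tensor_tgt_inl]
      exact (finsum_cond_eq_left (f := extend Sum.inl (N.tgt τ) 0) (a := s)).symm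
    · exact τ.elim

end OpenPetri

open OpenPetri in
theorem stmt_19_general (M : Type*) [AddCancelCommMonoid M]
    (F : ∀ {X Y : Type} [Finite X] [Finite Y], OpenPetri X Y → M)
    (hcomp : ∀ {X Y Z : Type} [Finite X] [Finite Y] [Finite Z]
      (P : OpenPetri X Y) (Q : OpenPetri Y Z), P.Monic → Q.Monic →
      F (P.comp Q) = F P + F Q)
    (hiso : ∀ {X Y : Type} [Finite X] [Finite Y] (P Q : OpenPetri X Y),
      Nonempty (OpenPetri.Iso P Q) → F P = F Q) :
    ∀ {X : Type} [Finite X] (N : OpenPetri X X), N.Monic →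
      ∀ (K : Type) (hK : Finite K), F (N.tensor (idNet K hK)) = F N := by
  intro X _ N hN K hK
  have h₁ : F (N.comp (inlNet X K)) = F N + F (inlNet X K) :=
    hcomp _ _ hN (inlNet_monic X K)
  have h₂ : F ((inlNet X K).comp (N.tensor (idNet K hK))) =
      F (inlNet X K) + F (N.tensor (idNet K hK)) :=
    hcomp _ _ (inlNet_monic X K) (hN.tensor (idNet_monic K hK))
  apply add_left_cancel (a := F (inlNet X K))
  rw [← h₂, hiso _ _ (nonempty_iso_inlNet_comp_tensor N K hK),
    ← hiso _ _ (nonempty_iso_comp_inlNet N K), h₁, add_comm]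

open OpenPetri in
/-- Let `M` be a cancellative commutative monoid with only trivial units and
`F` a (not necessarily monoidal) functor from `MOPetri` to `BM`: `F` sends
identities to `0`, is additive under composition of monically open Petri nets,
and is isomorphism-invariant. Then for any endomorphism mope net `N` (equal
domain and codomain `X`) and any finite set `K`, `F (N ⊕ id_K) = F N`. -/
theorem stmt_19 (M : Type*) [AddCancelCommMonoid M]
    (hunits : ∀ x : M, (∃ y : M, x + y = 0) → x = 0)
    (F : ∀ {X Y : Type} [Finite X] [Finite Y], OpenPetri X Y → M)
    (hid : ∀ (S : Type) (hS : Finite S), F (idNet S hS) = 0)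
    (hcomp : ∀ {X Y Z : Type} [Finite X] [Finite Y] [Finite Z]
      (P : OpenPetri X Y) (Q : OpenPetri Y Z), P.Monic → Q.Monic →
      F (P.comp Q) = F P + F Q)
    (hiso : ∀ {X Y : Type} [Finite X] [Finite Y] (P Q : OpenPetri X Y),
      Nonempty (OpenPetri.Iso P Q) → F P = F Q) :
    ∀ {X : Type} [Finite X] (N : OpenPetri X X), N.Monic →
      ∀ (K : Type) (hK : Finite K), F (N.tensor (idNet K hK)) = F N :=
  stmt_19_general M F hcomp hiso
end
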